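/- Let g be twice differentiable on (0,∞) with g'(μ) ≥ 0 and g''(μ) ≤ 0 for all μ > 0, let β1 ≥ 0, β2 > 0, and fix 0 < z1 < z3. Define D(z2) = g'(β1 + β2*z2) * h(z2)^2 where h(z2) = z1*z2*log(z2/z1) - z1*z3*log(z3/z1) + z2*z3*log(z3/z2). Then there exists z2* in the half-open interval (z1, z2^0] with D'(z2*) = 0, where log(z2^0) = [z3*log(z3) - z1*log(z1)]/(z3-z1) - 1. -/

import Mathlib

/-!
With `h' z = z1 log (z / z1) + z3 log (z3 / z) + z1 - z3`, the point `z2⁰` is exactly the zero of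
`h'`, and `z1 < z2⁰` by the strict inequality `log x < x - 1`. On `[z1, z2⁰]` the function
`D = g'(β1 + β2 z) h(z)²` is nonnegative and vanishes at `z1`, so by the mean value theorem `D'`
is nonnegative somewhere in `(z1, z2⁰)`; at `z2⁰` the term of `D'` containing `h'` drops out,
leaving `β2 g''(μ2) h(z2⁰)² ≤ 0`. Darboux's theorem then yields a zero of `D'` in between.
-/

open Real Set

theorem exists_eq_zero_mem_Ioc_of_le_of_nonpos {f f' : ℝ → ℝ} {a b : ℝ} (hab : a < b)
    (hf : ∀ x ∈ Icc a b, HasDerivAt f (f' x) x) (hfab : f a ≤ f b) (hb : f' b ≤ 0) :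
    ∃ x ∈ Ioc a b, f' x = 0 := by
  obtain ⟨c, hc, hslope⟩ := exists_hasDerivAt_eq_slope f f' hab
    (fun x hx => (hf x hx).continuousAt.continuousWithinAt)
    (fun x hx => hf x (Ioo_subset_Icc_self hx))
  have hcb : Icc c b ⊆ Icc a b := Icc_subset_Icc hc.1.le le_rfl
  have hc_nonneg : 0 ≤ f' c := by
    rw [hslope]
    exact div_nonneg (sub_nonneg.2 hfab) (sub_nonneg.2 hab.le)
  obtain ⟨x, hx, hx0⟩ : (0 : ℝ) ∈ f' '' Icc c b :=
    (ordConnected_Icc.image_hasDerivWithinAt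
      fun x hx => (hf x (hcb hx)).hasDerivWithinAt).out
      (mem_image_of_mem _ (right_mem_Icc.2 hc.2.le))
      (mem_image_of_mem _ (left_mem_Icc.2 hc.2.le)) ⟨hb, hc_nonneg⟩
  exact ⟨x, ⟨hc.1.trans_le hx.1, hx.2⟩, hx0⟩

theorem HasDerivAt.comp_affine_mul_sq {φ ψ : ℝ → ℝ} {β1 β2 a b z : ℝ}
    (hφ : HasDerivAt φ a (β1 + β2 * z)) (hψ : HasDerivAt ψ b z) :
    HasDerivAt (fun x => φ (β1 + β2 * x) * ψ x ^ 2)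
      (β2 * a * ψ z ^ 2 + 2 * φ (β1 + β2 * z) * ψ z * b) z := by
  have hμ : HasDerivAt (fun x => β1 + β2 * x) β2 z := by
    simpa using ((hasDerivAt_id' z).const_mul β2).const_add β1
  refine ((hφ.comp z hμ).fun_mul (hψ.fun_pow 2)).congr_deriv ?_
  simp only [Nat.cast_ofNat, Function.comp_apply]
  ring

noncomputable def logGap (z1 z3 z2 : ℝ) : ℝ :=
  z1 * z2 * log (z2 / z1) - z1 * z3 * log (z3 / z1) + z2 * z3 * log (z3 / z2)

theorem hasDerivAt_logGap {z1 z3 z : ℝ} (hz1 : 0 < z1) (hz3 : 0 < z3) (hz : 0 < z) :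
    HasDerivAt (logGap z1 z3)
      (z1 * log (z / z1) + z3 * log (z3 / z) + z1 - z3) z := by
  have hlog₁ : HasDerivAt (fun z2 => log (z2 / z1)) z⁻¹ z := by
    convert ((hasDerivAt_id' z).div_const z1).log (by positivity) using 1
    field_simp
  have hlog₃ : HasDerivAt (fun z2 => log (z3 / z2)) (-z⁻¹) z := by
    convert ((hasDerivAt_inv hz.ne').const_mul z3).log (by positivity) using 1
    · simp only [div_eq_mul_inv]
    · field_simp
  refine ((((hasDerivAt_id' z).const_mul z1).fun_mul hlog₁).sub_const
    (z1 * z3 * log (z3 / z1))).fun_add (((hasDerivAt_id' z).mul_const z3).fun_mul hlog₃)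
    |>.congr_deriv ?_
  field_simp
  ring

theorem log_lt_logGap_critical {z1 z3 : ℝ} (hz1 : 0 < z1) (hz13 : z1 < z3) :
    log z1 < (z3 * log z3 - z1 * log z1) / (z3 - z1) - 1 := by
  have hz3 : 0 < z3 := hz1.trans hz13
  have hlog : log (z1 / z3) < z1 / z3 - 1 :=
    log_lt_sub_one_of_pos (by positivity) (div_ne_one_of_ne hz13.ne)
  rw [log_div hz1.ne' hz3.ne'] at hlog
  rw [lt_sub_iff_add_lt, lt_div_iff₀ (sub_pos.2 hz13)]
  have := mul_lt_mul_of_pos_left hlog hz3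
  field_simp at this
  nlinarith

theorem logGap_deriv_eq_zero {z1 z3 z : ℝ} (hz1 : 0 < z1) (hz13 : z1 < z3) (hz : 0 < z)
    (hlog : log z = (z3 * log z3 - z1 * log z1) / (z3 - z1) - 1) :
    z1 * log (z / z1) + z3 * log (z3 / z) + z1 - z3 = 0 := by
  rw [log_div hz.ne' hz1.ne', log_div (hz1.trans hz13).ne' hz.ne', hlog]
  field_simp [(sub_pos.2 hz13).ne']
  ring

theorem stmt_13_general (g' g'' : ℝ → ℝ)
    (hg' : ∀ μ > (0:ℝ), HasDerivAt g' (g'' μ) μ)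
    (hg'nonneg : ∀ μ > (0:ℝ), 0 ≤ g' μ)
    (hg''nonpos : ∀ μ > (0:ℝ), g'' μ ≤ 0)
    (β1 β2 : ℝ) (hβ1 : 0 ≤ β1) (hβ2 : 0 < β2)
    (z1 z3 : ℝ) (hz1 : 0 < z1) (hz13 : z1 < z3) :
    let h : ℝ → ℝ := fun z2 => z1 * z2 * Real.log (z2 / z1) - z1 * z3 * Real.log (z3 / z1)
      + z2 * z3 * Real.log (z3 / z2)
    let D : ℝ → ℝ := fun z2 => g' (β1 + β2 * z2) * (h z2) ^ 2
    let z20 : ℝ := Real.exp ((z3 * Real.log z3 - z1 * Real.log z1) / (z3 - z1) - 1)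
    ∃ z2 ∈ Set.Ioc z1 z20, deriv D z2 = 0 := by
  intro h D z20
  have hlog20 : log z20 = (z3 * log z3 - z1 * log z1) / (z3 - z1) - 1 := log_exp _
  have hz20 : 0 < z20 := exp_pos _
  have hz1z20 : z1 < z20 := by
    rw [← exp_log hz1, ← exp_log hz20, exp_lt_exp, hlog20]
    exact log_lt_logGap_critical hz1 hz13
  have hμ : ∀ z > 0, 0 < β1 + β2 * z := fun z hz => by positivity
  have hD : ∀ z > 0, HasDerivAt D (β2 * g'' (β1 + β2 * z) * h z ^ 2
      + 2 * g' (β1 + β2 * z) * h z * (z1 * log (z / z1) + z3 * log (z3 / z) + z1 - z3)) z :=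
    fun z hz => (hg' _ (hμ z hz)).comp_affine_mul_sq (hasDerivAt_logGap hz1 (hz1.trans hz13) hz)
  have hD_mono : D z1 ≤ D z20 := by
    have hhz1 : h z1 = 0 := by simp [h]
    simpa [D, hhz1] using mul_nonneg (hg'nonneg _ (hμ z20 hz20)) (sq_nonneg (h z20))
  have hh'z20 := logGap_deriv_eq_zero hz1 hz13 hz20 hlog20
  obtain ⟨x, hx, hx0⟩ := exists_eq_zero_mem_Ioc_of_le_of_nonpos hz1z20
    (fun z hz => hD z (hz1.trans_le hz.1)) hD_mono (by
      rw [hh'z20, mul_zero, add_zero]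
      exact mul_nonpos_of_nonpos_of_nonneg
        (mul_nonpos_of_nonneg_of_nonpos hβ2.le (hg''nonpos _ (hμ z20 hz20))) (sq_nonneg _))
  exact ⟨x, hx, (hD x (hz1.trans hx.1)).deriv.trans hx0⟩

theorem stmt_13 (g g' g'' : ℝ → ℝ)
    (hg : ∀ μ > (0:ℝ), HasDerivAt g (g' μ) μ)
    (hg' : ∀ μ > (0:ℝ), HasDerivAt g' (g'' μ) μ)
    (hg'nonneg : ∀ μ > (0:ℝ), 0 ≤ g' μ)
    (hg''nonpos : ∀ μ > (0:ℝ), g'' μ ≤ 0)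
    (β1 β2 : ℝ) (hβ1 : 0 ≤ β1) (hβ2 : 0 < β2)
    (z1 z3 : ℝ) (hz1 : 0 < z1) (hz13 : z1 < z3) :
    let h : ℝ → ℝ := fun z2 => z1 * z2 * Real.log (z2 / z1) - z1 * z3 * Real.log (z3 / z1)
      + z2 * z3 * Real.log (z3 / z2)
    let D : ℝ → ℝ := fun z2 => g' (β1 + β2 * z2) * (h z2) ^ 2
    let z20 : ℝ := Real.exp ((z3 * Real.log z3 - z1 * Real.log z1) / (z3 - z1) - 1)
    ∃ z2 ∈ Set.Ioc z1 z20, deriv D z2 = 0 :=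
  stmt_13_general g' g'' hg' hg'nonneg hg''nonpos β1 β2 hβ1 hβ2 z1 z3 hz1 hz13
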